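/- Let n ≥ 1 and r ≥ 1. Let Γ be a closed subgroup of the torus T^n = (ℝ/ℤ)^n such that its preimage q⁻¹(Γ) ⊆ ℝ^n is a union of affine hyperplanes all parallel to one fixed linear hyperplane H ⊂ ℝ^n (this encodes that Γ has codimension at most one; in the case Γ = T^n the preimage ℝ^n is the union of all translates of H). Then Γ satisfies Condition A for r if and only if Γ ∩ Π_r ≠ ∅. -/

import Mathlib

noncomputable section

/-- The `n`-dimensional torus `(ℝ/ℤ)^n`. -/
abbrev Torus (n : ℕ) := Fin n → AddCircle (1 : ℝ)

/-- The quotient homomorphism `q : ℝ^n → T^n`. -/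
def qmap (n : ℕ) (v : Fin n → ℝ) : Torus n := fun j => (v j : AddCircle (1 : ℝ))

/-- Condition A for `r`: there are `r` points of `Γ` with lifts `λ i j ∈ (0,1)`
whose coordinatewise sums are all `< 1`. -/
def CondA (n r : ℕ) (Γ : Set (Torus n)) : Prop :=
  ∃ lam : Fin r → Fin n → ℝ,
    (∀ i j, 0 < lam i j ∧ lam i j < 1) ∧
    (∀ i, qmap n (lam i) ∈ Γ) ∧
    (∀ j, (∑ i, lam i j) < 1)

/-- `Π_r`, the image under `q` of the open cube `(0, 1/r)^n`. -/
def PiCube (n r : ℕ) : Set (Torus n) :=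
  qmap n '' {v | ∀ j, 0 < v j ∧ v j < 1 / (r : ℝ)}

/-!
Write `L = q⁻¹(Γ) = f⁻¹(C)`. The image of the open cube `(0, a)^n` under the nonzero functional `f`
is the open interval `a • (N, P)`, where `N` and `P` are the values of `f` at two opposite vertices
of the unit cube. Given lifts `λ_1, …, λ_r ∈ L` as in Condition A, the values `s_i = f(λ_i) ∈ C` and
their sum `f(∑ λ_i)` lie in `(N, P)`. If `N < 0 < P`, then `0 ∈ C` lies in `(N/r, P/r)`; if
`N ≥ 0`, the smallest `s_i` is below the average `∑ s_i / r < P/r` and above `N ≥ N/r`; the case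
`P ≤ 0` is symmetric. Either way some point of `(0, 1/r)^n` lies in `L`.
-/

open Set

theorem exists_mem_Ioo_div_of_sum_mem_Ioo {C : Set ℝ} (h0 : 0 ∈ C) {N P : ℝ} {r : ℕ} (hr : 0 < r)
    {s : Fin r → ℝ} (hsC : ∀ i, s i ∈ C) (hs : ∀ i, s i ∈ Ioo N P) (hsum : ∑ i, s i ∈ Ioo N P) :
    ∃ t ∈ C, t ∈ Ioo (N / r) (P / r) := by
  have hr1 : (1 : ℝ) ≤ r := by exact_mod_cast hr
  have hr0 : (0 : ℝ) < r := by positivity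
  have hsum_const : ∀ x : ℝ, ∑ _i : Fin r, x / r = x := fun x => by
    rw [Finset.sum_const, Finset.card_univ, Fintype.card_fin, nsmul_eq_mul]
    field_simp
  by_cases hN : 0 ≤ N
  · obtain ⟨i, -, hi⟩ := Finset.exists_lt_of_sum_lt (f := s) (g := fun _ => P / r)
      (by rw [hsum_const]; exact hsum.2)
    exact ⟨s i, hsC i, (div_le_self hN hr1).trans_lt (hs i).1, hi⟩
  by_cases hP : P ≤ 0
  · obtain ⟨i, -, hi⟩ := Finset.exists_lt_of_sum_lt (f := fun _ => N / r) (g := s)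
      (by rw [hsum_const]; exact hsum.1)
    refine ⟨s i, hsC i, hi, (hs i).2.trans_le ?_⟩
    rw [le_div_iff₀ hr0]
    nlinarith
  exact ⟨0, h0, div_neg_of_neg_of_pos (by linarith) hr0, div_pos (by linarith) hr0⟩

namespace LinearMap

variable {ι : Type*} [DecidableEq ι] (f : (ι → ℝ) →ₗ[ℝ] ℝ)

/-- The vertex of the unit cube `[0,1]^ι` at which `f` is minimal. -/
def minVertex : ι → ℝ := fun j => if f (Pi.single j 1) < 0 then 1 else 0

variable {f}

theorem openSegment_minVertex_subset_cube {a : ℝ} (ha : 0 < a) :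
    openSegment ℝ (a • f.minVertex) (a • (1 - f.minVertex)) ⊆ univ.pi fun _ => Ioo 0 a := by
  rintro _ ⟨θ₁, θ₂, hθ₁, hθ₂, hθ, rfl⟩ j -
  simp only [minVertex, Pi.add_apply, Pi.smul_apply, Pi.sub_apply, Pi.one_apply, smul_eq_mul]
  split_ifs <;> constructor <;> nlinarith

variable [Fintype ι]

theorem apply_eq_sum_mul_apply_single (v : ι → ℝ) : f v = ∑ j, v j * f (Pi.single j 1) := by
  conv_lhs => rw [← Finset.univ_sum_single v, map_sum]
  refine Finset.sum_congr rfl fun j _ => ?_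
  rw [← smul_eq_mul, ← map_smul, ← Pi.single_smul, smul_eq_mul, mul_one]

theorem apply_smul_minVertex_lt (hf : f ≠ 0) {a : ℝ} {v : ι → ℝ}
    (hv : v ∈ univ.pi fun _ => Ioo 0 a) : f (a • f.minVertex) < f v := by
  obtain ⟨j₀, hj₀⟩ : ∃ j, f (Pi.single j 1) ≠ 0 := by
    by_contra! h
    exact hf (LinearMap.ext fun v => by simp [apply_eq_sum_mul_apply_single, h])
  have hterm : ∀ j, 0 ≤ (v j - a * f.minVertex j) * f (Pi.single j 1) ∧
      (f (Pi.single j 1) ≠ 0 → 0 < (v j - a * f.minVertex j) * f (Pi.single j 1)) := by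
    intro j
    obtain ⟨hv0, hva⟩ := hv j (mem_univ j)
    unfold minVertex
    split_ifs with hneg
    · exact ⟨by nlinarith, fun _ => by nlinarith⟩
    · replace hneg := not_lt.mp hneg
      exact ⟨by nlinarith, fun hne => by nlinarith [hneg.lt_of_ne' hne]⟩
  rw [← sub_pos, ← map_sub, apply_eq_sum_mul_apply_single]
  exact Finset.sum_pos' (fun j _ => (hterm j).1) ⟨j₀, Finset.mem_univ _, (hterm j₀).2 hj₀⟩

theorem apply_lt_apply_smul_one_sub_minVertex (hf : f ≠ 0) {a : ℝ} {v : ι → ℝ}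
    (hv : v ∈ univ.pi fun _ => Ioo 0 a) : f v < f (a • (1 - f.minVertex)) := by
  have hv' : (fun j => a - v j) ∈ univ.pi fun _ => Ioo (0 : ℝ) a := fun j _ => by
    obtain ⟨hv0, hva⟩ := hv j (mem_univ j)
    constructor <;> linarith
  have key := apply_smul_minVertex_lt hf hv'
  have hsplit : a • (1 - f.minVertex) = (fun j => a - v j) - a • f.minVertex + v := by
    ext j
    simp only [Pi.smul_apply, Pi.sub_apply, Pi.add_apply, Pi.one_apply, smul_eq_mul]
    ring
  rw [hsplit, map_add, map_sub]
  linarith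

theorem image_cube (hf : f ≠ 0) {a : ℝ} (ha : 0 < a) :
    f '' (univ.pi fun _ => Ioo 0 a) =
      Ioo (a * f f.minVertex) (a * f (1 - f.minVertex)) := by
  simp only [← smul_eq_mul, ← map_smul]
  refine Subset.antisymm ?_ fun t ht => ?_
  · rintro _ ⟨v, hv, rfl⟩
    exact ⟨apply_smul_minVertex_lt hf hv, apply_lt_apply_smul_one_sub_minVertex hf hv⟩
  · replace ht := Ioo_subset_openSegment ht
    rw [← LinearMap.coe_toAffineMap, ← image_openSegment] at ht
    exact image_mono (openSegment_minVertex_subset_cube ha) ht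

theorem exists_apply_mem_of_sum_mem_cube (hf : f ≠ 0) {C : Set ℝ} (h0 : 0 ∈ C) {r : ℕ}
    (hr : 0 < r) {lam : Fin r → ι → ℝ} (hlam : ∀ i, lam i ∈ univ.pi fun _ => Ioo 0 1)
    (hlamC : ∀ i, f (lam i) ∈ C) (hsum : ∑ i, lam i ∈ univ.pi fun _ => Ioo 0 1) :
    ∃ w ∈ univ.pi (fun _ => Ioo 0 (1 / r : ℝ)), f w ∈ C := by
  have hunit := image_cube hf one_pos
  simp only [one_mul] at hunit
  obtain ⟨t, htC, ht⟩ := exists_mem_Ioo_div_of_sum_mem_Ioo h0 hr hlamC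
    (fun i => hunit ▸ mem_image_of_mem f (hlam i))
    (by rw [← map_sum, ← hunit]; exact mem_image_of_mem f hsum)
  have hcube := image_cube hf (a := 1 / r) (by positivity)
  rw [one_div_mul_eq_div, one_div_mul_eq_div] at hcube
  rw [← hcube] at ht
  obtain ⟨w, hw, rfl⟩ := ht
  exact ⟨w, hw, htC⟩

end LinearMap

theorem condA_of_inter_piCube_nonempty {n r : ℕ} (hr : 0 < r) {Γ : Set (Torus n)}
    (h : (Γ ∩ PiCube n r).Nonempty) : CondA n r Γ := by
  obtain ⟨_, hθ, v, hv, rfl⟩ := h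
  have hr' : (0 : ℝ) < r := by exact_mod_cast hr
  have hr1 : 1 / (r : ℝ) ≤ 1 := by
    rw [div_le_one hr']
    exact_mod_cast hr
  refine ⟨fun _ => v, fun _ j => ⟨(hv j).1, (hv j).2.trans_le hr1⟩, fun _ => hθ, fun j => ?_⟩
  rw [Finset.sum_const, Finset.card_univ, Fintype.card_fin, nsmul_eq_mul]
  exact (lt_div_iff₀' hr').mp (hv j).2

theorem condA_iff_inter_piCube_of_codim_le_one
    (n r : ℕ) (hr : 1 ≤ r)
    (Γ : AddSubgroup (Torus n))
    (f : (Fin n → ℝ) →ₗ[ℝ] ℝ) (hf : f ≠ 0)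
    (C : Set ℝ) (hpre : qmap n ⁻¹' (Γ : Set (Torus n)) = f ⁻¹' C) :
    CondA n r (Γ : Set (Torus n)) ↔ ((Γ : Set (Torus n)) ∩ PiCube n r).Nonempty := by
  have hmem : ∀ v, qmap n v ∈ (Γ : Set (Torus n)) ↔ f v ∈ C := fun v => Set.ext_iff.1 hpre v
  refine ⟨fun ⟨lam, hlam, hlamΓ, hsum⟩ => ?_, condA_of_inter_piCube_nonempty hr⟩
  have h0 : (0 : ℝ) ∈ C := by
    have hq0 : qmap n 0 = 0 := by
      ext
      simp [qmap]
    rw [← map_zero f, ← hmem, hq0]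
    exact Γ.zero_mem
  have hsum_cube : ∑ i, lam i ∈ univ.pi fun _ => Ioo (0 : ℝ) 1 := fun j _ => by
    rw [Finset.sum_apply]
    exact ⟨Finset.sum_pos (fun i _ => (hlam i j).1) (Finset.univ_nonempty_iff.2 ⟨⟨0, hr⟩⟩), hsum j⟩
  obtain ⟨w, hw, hwC⟩ := f.exists_apply_mem_of_sum_mem_cube hf h0 hr (fun i j _ => hlam i j)
    (fun i => (hmem _).1 (hlamΓ i)) hsum_cube
  exact ⟨qmap n w, (hmem w).2 hwC, w, fun j => hw j (mem_univ j), rfl⟩
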